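/- In the canonical calculus G₀ whose only logical rules are Θ/⇒ Qv₁(p₁(v₁),p₂(v₁)) and Θ/Qv₁(p₁(v₁),p₂(v₁))⇒ with Θ = {p₁(v₁)⇒p₂(v₁); ⇒p₁(c₁); ⇒p₂(c₁); p₁(c₂)⇒; p₂(c₂)⇒; p₁(c₃)⇒; ⇒p₂(c₃)}, every provable sequent is a logical axiom (i.e. contains formulas A ∈ Γ, B ∈ Δ with A ≡_α B); consequently G₀ admits cut-elimination although it is not coherent. -/

import Mathlib

open Classical

noncomputable section

/-! A first-order language with `(n,k)`-ary quantifiers. -/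

/-- A signature: function symbols, predicate symbols, and `(n,k)`-ary
quantifiers (`qn Q = n` formulas connected, `qk Q = k` variables bound). -/
structure Sig where
  Func : Type
  farity : Func → ℕ
  Pred : Type
  parity : Pred → ℕ
  Quant : Type
  qn : Quant → ℕ
  qk : Quant → ℕ

/-- Terms of `L(D)`: the language extended with an individual constant for
each element of `D` (take `D := Empty` for the base language `L`). -/
inductive Tm (σ : Sig) (D : Type) where
  | var : ℕ → Tm σ D
  | func : (f : σ.Func) → (Fin (σ.farity f) → Tm σ D) → Tm σ D
  | dconst : D → Tm σ D

/-- Formulas of `L(D)`: atomic formulas and `(n,k)`-ary quantified formulas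
`Q x₁…x_k (ψ₁,…,ψₙ)`. -/
inductive Fm (σ : Sig) (D : Type) where
  | atom : (p : σ.Pred) → (Fin (σ.parity p) → Tm σ D) → Fm σ D
  | quant : (q : σ.Quant) → (Fin (σ.qk q) → ℕ) → (Fin (σ.qn q) → Fm σ D) → Fm σ D

variable {σ : Sig} {D : Type}

namespace Tm

/-- The variables occurring in a term. -/
def vars : Tm σ D → Set ℕ
  | .var n => {n}
  | .func _ ts => ⋃ i, (ts i).vars
  | .dconst _ => ∅

/-- Simultaneous substitution of terms for variables in a term. -/
def subst (s : ℕ → Tm σ D) : Tm σ D → Tm σ D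
  | .var n => s n
  | .func f ts => .func f (fun i => (ts i).subst s)
  | .dconst a => .dconst a

end Tm

namespace Fm

/-- The free variables of a formula. -/
def fv : Fm σ D → Set ℕ
  | .atom _ ts => ⋃ i, (ts i).vars
  | .quant _ xs ψ => (⋃ i, (ψ i).fv) \ Set.range xs

/-- The bound variables of a formula. -/
def bv : Fm σ D → Set ℕ
  | .atom _ _ => ∅
  | .quant _ xs ψ => Set.range xs ∪ ⋃ i, (ψ i).bv

/-- All variables occurring (free or bound) in a formula. -/
def allVars : Fm σ D → Set ℕ
  | .atom _ ts => ⋃ i, (ts i).vars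
  | .quant _ xs ψ => Set.range xs ∪ ⋃ i, (ψ i).allVars

/-- Simultaneous substitution of terms for the free variables of a formula
(bound variables are left untouched). -/
def subst (s : ℕ → Tm σ D) : Fm σ D → Fm σ D
  | .atom p ts => .atom p (fun i => (ts i).subst s)
  | .quant q xs ψ =>
      .quant q xs (fun i => (ψ i).subst (fun n => if ∃ j, xs j = n then .var n else s n))

end Fm

/-- The renaming substitution `{z₁/x₁, …, z_k/x_k}`. -/
def renVar {k : ℕ} (xs zs : Fin k → ℕ) : ℕ → Tm σ D := fun n =>
  if h : ∃ j, xs j = n then .var (zs (Classical.choose h)) else .var n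

/-- `α`-equivalence: identity up to renaming of bound variables. Two
quantified formulas are `α`-equivalent when, for fresh distinct variables
`z₁,…,z_k`, the corresponding bodies with the bound variables renamed to the
`zᵢ` are `α`-equivalent. -/
inductive AlphaEq : Fm σ D → Fm σ D → Prop
  | atom (p : σ.Pred) (ts : Fin (σ.parity p) → Tm σ D) : AlphaEq (.atom p ts) (.atom p ts)
  | quant (q : σ.Quant) (xs ys : Fin (σ.qk q) → ℕ)
      (ψ φ : Fin (σ.qn q) → Fm σ D) (zs : Fin (σ.qk q) → ℕ)
      (hinj : Function.Injective zs)
      (hfresh : ∀ j, zs j ∉ (Fm.quant q xs ψ).allVars ∪ (Fm.quant q ys φ).allVars)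
      (h : ∀ i, AlphaEq ((ψ i).subst (renVar xs zs)) ((φ i).subst (renVar ys zs))) :
      AlphaEq (.quant q xs ψ) (.quant q ys φ)

/-! Structures and the congruence relation `∼^S`. -/

/-- An `L`-structure: a nonempty domain with interpretations of function and
predicate symbols (two-valued predicates). -/
structure Struc (σ : Sig) where
  D : Type
  ne : Nonempty D
  funcI : (f : σ.Func) → (Fin (σ.farity f) → D) → D
  predI : (p : σ.Pred) → (Fin (σ.parity p) → D) → Bool

/-- Evaluation of a term of `L(D)` in `S` under an assignment. -/
def Tm.eval (S : Struc σ) (v : ℕ → S.D) : Tm σ S.D → S.D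
  | .var n => v n
  | .func f ts => S.funcI f (fun i => (ts i).eval S v)
  | .dconst a => a

/-- The congruence `∼^S` on terms of `L(D)`: reflexivity on variables, closed
terms with the same value are related, and compatibility with function
symbols. -/
inductive TmEq (S : Struc σ) : Tm σ S.D → Tm σ S.D → Prop
  | var (n : ℕ) : TmEq S (.var n) (.var n)
  | closed {t t' : Tm σ S.D} : t.vars = ∅ → t'.vars = ∅ →
      (∀ v, t.eval S v = t'.eval S v) → TmEq S t t'
  | func (f : σ.Func) (ts ts' : Fin (σ.farity f) → Tm σ S.D) :
      (∀ i, TmEq S (ts i) (ts' i)) → TmEq S (.func f ts) (.func f ts')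

/-- The congruence `∼^S` on formulas of `L(D)`. -/
inductive FmEq (S : Struc σ) : Fm σ S.D → Fm σ S.D → Prop
  | atom (p : σ.Pred) (ts ts' : Fin (σ.parity p) → Tm σ S.D) :
      (∀ i, TmEq S (ts i) (ts' i)) → FmEq S (.atom p ts) (.atom p ts')
  | quant (q : σ.Quant) (xs ys : Fin (σ.qk q) → ℕ)
      (ψ φ : Fin (σ.qn q) → Fm σ S.D) (zs : Fin (σ.qk q) → ℕ)
      (hinj : Function.Injective zs)
      (hfresh : ∀ j, zs j ∉ (Fm.quant q xs ψ).allVars ∪ (Fm.quant q ys φ).allVars)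
      (h : ∀ i, FmEq S ((ψ i).subst (renVar xs zs)) ((φ i).subst (renVar ys zs))) :
      FmEq S (.quant q xs ψ) (.quant q ys φ)

/-! Canonical rules: clauses over the simplified language `L^n_k(Con)`
(`n` `k`-ary predicate symbols `p₁,…,pₙ`, constants, no function symbols). -/

/-- Terms of the simplified language: (schematic) variables and constants,
both numbered. -/
inductive RTm where
  | rvar : ℕ → RTm
  | rconst : ℕ → RTm
deriving DecidableEq

/-- Atomic formulas `pᵢ(t₁,…,t_k)` of `L^n_k(Con)`. -/
structure RAtom (n k : ℕ) where
  idx : Fin n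
  args : Fin k → RTm

/-- A clause over `L^n_k(Con)`. -/
structure RClause (n k : ℕ) where
  ant : List (RAtom n k)
  suc : List (RAtom n k)

def RClause.atoms {n k : ℕ} (cl : RClause n k) : List (RAtom n k) := cl.ant ++ cl.suc

/-- A canonical `(n,k)`-ary rule `Θ/Q(s)` for the quantifier `q`; `side = true`
means a right-introduction rule `Θ/⇒ Q v⃗ (p₁(v⃗),…,pₙ(v⃗))`, `side = false`
a left-introduction rule. -/
structure Rule (σ : Sig) where
  q : σ.Quant
  side : Bool
  prem : List (RClause (σ.qn q) (σ.qk q))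

/-- A canonical calculus: a finite list of canonical rules. -/
abbrev CanCalc (σ : Sig) := List (Rule σ)

/-- Variables occurring in a set of rule-clauses. -/
def ruleVars {n k : ℕ} (Θ : List (RClause n k)) : Set ℕ :=
  {x | ∃ cl ∈ Θ, ∃ a ∈ cl.atoms, ∃ j, a.args j = RTm.rvar x}

/-- Constants occurring in a set of rule-clauses. -/
def ruleConsts {n k : ℕ} (Θ : List (RClause n k)) : Set ℕ :=
  {c | ∃ cl ∈ Θ, ∃ a ∈ cl.atoms, ∃ j, a.args j = RTm.rconst c}

/-- Semantics of rule-clauses in a structure for `L^n_k(Con)`. -/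
def RAtom.evalR {n k : ℕ} {D : Type} (cI : ℕ → D) (pI : Fin n → (Fin k → D) → Bool)
    (v : ℕ → D) (a : RAtom n k) : Bool :=
  pI a.idx (fun j => match a.args j with
    | .rvar x => v x
    | .rconst c => cI c)

def RClause.trueIn {n k : ℕ} {D : Type} (cI : ℕ → D) (pI : Fin n → (Fin k → D) → Bool)
    (v : ℕ → D) (cl : RClause n k) : Prop :=
  (∃ a ∈ cl.ant, a.evalR cI pI v = false) ∨ (∃ a ∈ cl.suc, a.evalR cI pI v = true)

/-- Validity of a set of rule-clauses in a structure (truth under all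
assignments). -/
def RValidIn {n k : ℕ} (D : Type) (cI : ℕ → D) (pI : Fin n → (Fin k → D) → Bool)
    (Θ : List (RClause n k)) : Prop :=
  ∀ v : ℕ → D, ∀ cl ∈ Θ, cl.trueIn cI pI v

/-- Classical consistency of a set of rule-clauses. -/
def RConsistent {n k : ℕ} (Θ : List (RClause n k)) : Prop :=
  ∃ (D : Type) (_ : Nonempty D) (cI : ℕ → D) (pI : Fin n → (Fin k → D) → Bool) (v : ℕ → D),
    ∀ cl ∈ Θ, cl.trueIn cI pI v

/-- Renaming of variables and constants in rule-clauses. -/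
def RTm.ren (rv rc : ℕ → ℕ) : RTm → RTm
  | .rvar x => .rvar (rv x)
  | .rconst c => .rconst (rc c)

def RAtom.ren {n k : ℕ} (rv rc : ℕ → ℕ) (a : RAtom n k) : RAtom n k :=
  ⟨a.idx, fun j => (a.args j).ren rv rc⟩

def RClause.ren {n k : ℕ} (rv rc : ℕ → ℕ) (cl : RClause n k) : RClause n k :=
  ⟨cl.ant.map (RAtom.ren rv rc), cl.suc.map (RAtom.ren rv rc)⟩

def renClauses {n k : ℕ} (rv rc : ℕ → ℕ) (Θ : List (RClause n k)) : List (RClause n k) :=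
  Θ.map (RClause.ren rv rc)

/-- A renaming suitable for forming `Rnm(Θ₁ ∪ Θ₂)`: variables and constants of
`Θ₂` clashing with `Θ₁` are renamed injectively to fresh ones, the others
are kept. -/
def GoodRen {n k : ℕ} (Θ₁ Θ₂ : List (RClause n k)) (rv rc : ℕ → ℕ) : Prop :=
  Function.Injective rv ∧ Function.Injective rc ∧
  (∀ x ∈ ruleVars Θ₂,
    (x ∈ ruleVars Θ₁ → rv x ∉ ruleVars Θ₁ ∪ ruleVars Θ₂) ∧
    (x ∉ ruleVars Θ₁ → rv x = x)) ∧
  (∀ c ∈ ruleConsts Θ₂,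
    (c ∈ ruleConsts Θ₁ → rc c ∉ ruleConsts Θ₁ ∪ ruleConsts Θ₂) ∧
    (c ∉ ruleConsts Θ₁ → rc c = c))

/-- **Coherence** of a canonical calculus: for every two dual rules
`Θ₁/⇒A` and `Θ₂/A⇒`, the set `Rnm(Θ₁ ∪ Θ₂)` is classically inconsistent. -/
def Coherent {σ : Sig} (G : CanCalc σ) : Prop :=
  ∀ (q : σ.Quant) (Θ₁ Θ₂ : List (RClause (σ.qn q) (σ.qk q))),
    Rule.mk q true Θ₁ ∈ G → Rule.mk q false Θ₂ ∈ G →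
    ∀ rv rc, GoodRen Θ₁ Θ₂ rv rc → ¬ RConsistent (Θ₁ ++ renClauses rv rc Θ₂)

/-! Two-valued non-deterministic matrices and their semantics. -/

/-- A 2Nmatrix: truth values `Bool` with `true` designated; each `(n,k)`-ary
quantifier gets a distribution function `Q̃ : P⁺({t,f}ⁿ) → P⁺({t,f})`. -/
structure NMatrix (σ : Sig) where
  qI : (q : σ.Quant) → Set (Fin (σ.qn q) → Bool) → Set Bool
  ne : ∀ q E, E.Nonempty → (qI q E).Nonempty

/-- The substitution `{ā₁/x₁, …, ā_k/x_k}` of individual constants for the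
bound variables. -/
def dsubst {k : ℕ} {D : Type} (xs : Fin k → ℕ) (as : Fin k → D) : ℕ → Tm σ D := fun n =>
  if h : ∃ j, xs j = n then .dconst (as (Classical.choose h)) else .var n

/-- An `M`-legal `S`-valuation: a two-valued valuation of the sentences of
`L(D)` respecting `∼^S`, the interpretation of atomic sentences, and the
distribution functions of the quantifiers. -/
structure LegalVal {σ : Sig} (M : NMatrix σ) (S : Struc σ) where
  v : Fm σ S.D → Bool
  respects : ∀ ψ ψ' : Fm σ S.D, ψ.fv = ∅ → ψ'.fv = ∅ → FmEq S ψ ψ' → v ψ = v ψ'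
  atoms : ∀ (p : σ.Pred) (ts : Fin (σ.parity p) → Tm σ S.D) (w : ℕ → S.D),
    (Fm.atom p ts).fv = ∅ →
    v (.atom p ts) = S.predI p (fun i => (ts i).eval S w)
  quants : ∀ (q : σ.Quant) (xs : Fin (σ.qk q) → ℕ) (ψ : Fin (σ.qn q) → Fm σ S.D),
    (Fm.quant q xs ψ).fv = ∅ →
    v (.quant q xs ψ) ∈
      M.qI q {tp | ∃ as : Fin (σ.qk q) → S.D, tp = fun i => v ((ψ i).subst (dsubst xs as))}

/-- Embedding of `L`-terms into `L(D)`-terms. -/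
def Tm.emb {σ : Sig} {D : Type} : Tm σ Empty → Tm σ D
  | .var n => .var n
  | .func f ts => .func f (fun i => (ts i).emb)
  | .dconst a => a.elim

/-- Embedding of `L`-formulas into `L(D)`-formulas. -/
def Fm.emb {σ : Sig} {D : Type} : Fm σ Empty → Fm σ D
  | .atom p ts => .atom p (fun i => (ts i).emb)
  | .quant q xs ψ => .quant q xs (fun i => (ψ i).emb)

/-- Sequents over the language `L` (sets of formulas, as in the paper). -/
structure Sqnt (σ : Sig) where
  ant : Set (Fm σ Empty)
  suc : Set (Fm σ Empty)

/-- An `S`-substitution: an assignment of closed `L(D)`-terms to variables. -/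
def ClosedSub {σ : Sig} (S : Struc σ) (s : ℕ → Tm σ S.D) : Prop :=
  ∀ n, (s n).vars = ∅

/-- `σ[ψ]` : the closed instance of an `L`-formula under an `S`-substitution. -/
def applySub {σ : Sig} (S : Struc σ) (s : ℕ → Tm σ S.D) (A : Fm σ Empty) : Fm σ S.D :=
  (Fm.emb A).subst s

/-- `M`-validity of a sequent in `⟨S, v⟩`. -/
def SeqValid {σ : Sig} (M : NMatrix σ) (S : Struc σ) (V : LegalVal M S) (sq : Sqnt σ) : Prop :=
  ∀ s : ℕ → Tm σ S.D, ClosedSub S s →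
    (∀ A ∈ sq.ant, V.v (applySub S s A) = true) → ∃ B ∈ sq.suc, V.v (applySub S s B) = true

/-- The semantic consequence relation `S ⊢_M Γ⇒Δ`. -/
def Models {σ : Sig} (M : NMatrix σ) (Hyp : Set (Sqnt σ)) (sq : Sqnt σ) : Prop :=
  ∀ (S : Struc σ) (V : LegalVal M S),
    (∀ h ∈ Hyp, SeqValid M S V h) → SeqValid M S V sq

/-! The proof system of a canonical calculus. -/

/-- `t` is free for `x` in `ψ`. -/
def FreeFor {σ : Sig} {D : Type} (t : Tm σ D) (x : ℕ) : Fm σ D → Prop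
  | .atom _ _ => True
  | .quant q xs ψ =>
      (∃ j, xs j = x) ∨ x ∉ (Fm.quant q xs ψ).fv ∨
        ((∀ j, xs j ∉ t.vars) ∧ ∀ i, FreeFor t x (ψ i))

/-- An instantiation (`χ`-mapping) of the schematic language `L^n_k(Con)`
into `L`: formulas for the predicate symbols, `L`-variables for the schematic
variables (eigenvariables), `L`-terms for the constants. -/
structure ChiMap (σ : Sig) (n : ℕ) where
  fp : Fin n → Fm σ Empty
  fvv : ℕ → ℕ
  fc : ℕ → Tm σ Empty

/-- The `L`-term instantiating a schematic term. -/
def ChiMap.tm {σ : Sig} {n : ℕ} (χ : ChiMap σ n) : RTm → Tm σ Empty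
  | .rvar x => .var (χ.fvv x)
  | .rconst c => χ.fc c

/-- `χ[pᵢ(t₁,…,t_k)] = χ[pᵢ]{χ[t₁]/z₁, …, χ[t_k]/z_k}`. -/
def ChiMap.atomFm {σ : Sig} {n k : ℕ} (χ : ChiMap σ n) (zs : Fin k → ℕ)
    (a : RAtom n k) : Fm σ Empty :=
  (χ.fp a.idx).subst
    (fun m => if h : ∃ j, zs j = m then χ.tm (a.args (Classical.choose h)) else .var m)

def ChiMap.fmSet {σ : Sig} {n k : ℕ} (χ : ChiMap σ n) (zs : Fin k → ℕ)
    (l : List (RAtom n k)) : Set (Fm σ Empty) :=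
  {A | ∃ a ∈ l, A = χ.atomFm zs a}

/-- The formula `Q z₁…z_k (χ[p₁],…,χ[pₙ])` introduced by an application. -/
def concFm {σ : Sig} (q : σ.Quant) (zs : Fin (σ.qk q) → ℕ) (χ : ChiMap σ (σ.qn q)) :
    Fm σ Empty :=
  .quant q zs (fun i => χ.fp i)

/-- The side conditions of a `⟨R,Γ∪Δ,z₁,…,z_k⟩`-mapping. -/
def ChiOK {σ : Sig} (R : Rule σ) (χ : ChiMap σ (σ.qn R.q)) (zs : Fin (σ.qk R.q) → ℕ)
    (Γ Δ : Set (Fm σ Empty)) : Prop :=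
  Function.Injective zs ∧
  Function.Injective χ.fvv ∧
  (∀ c x, x ∈ ruleVars R.prem → χ.fvv x ∉ (χ.fc c).vars) ∧
  (∀ cl ∈ R.prem, ∀ a ∈ cl.atoms, ∀ j,
    FreeFor (χ.tm (a.args j)) (zs j) (χ.fp a.idx) ∧
    (∀ x, a.args j = RTm.rvar x →
      χ.fvv x ∉ (⋃ A ∈ Γ ∪ Δ, Fm.fv A) ∪ (concFm R.q zs χ).fv))

/-- Derivations in a canonical calculus `G` from hypotheses `Hyp`, with cuts
allowed only on formulas from `Cut`: the `α`-axioms, weakening, cut, and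
applications of the canonical rules of `G`. -/
inductive Deriv {σ : Sig} (G : CanCalc σ) (Hyp : Set (Sqnt σ)) (Cut : Set (Fm σ Empty)) :
    Sqnt σ → Prop
  | hyp {s : Sqnt σ} : s ∈ Hyp → Deriv G Hyp Cut s
  | ax {A A' : Fm σ Empty} : AlphaEq A A' → Deriv G Hyp Cut ⟨{A}, {A'}⟩
  | weaken {Γ Δ Γ' Δ' : Set (Fm σ Empty)} :
      Deriv G Hyp Cut ⟨Γ, Δ⟩ → Γ ⊆ Γ' → Δ ⊆ Δ' → Deriv G Hyp Cut ⟨Γ', Δ'⟩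
  | cut {A : Fm σ Empty} {Γ Δ : Set (Fm σ Empty)} : A ∈ Cut →
      Deriv G Hyp Cut ⟨Γ, insert A Δ⟩ → Deriv G Hyp Cut ⟨insert A Γ, Δ⟩ →
      Deriv G Hyp Cut ⟨Γ, Δ⟩
  | app {R : Rule σ} (hR : R ∈ G) (χ : ChiMap σ (σ.qn R.q)) (zs : Fin (σ.qk R.q) → ℕ)
      (Γ Δ : Set (Fm σ Empty)) (hok : ChiOK R χ zs Γ Δ)
      (hprem : ∀ cl ∈ R.prem,
        Deriv G Hyp Cut ⟨Γ ∪ χ.fmSet zs cl.ant, Δ ∪ χ.fmSet zs cl.suc⟩) :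
      Deriv G Hyp Cut
        (cond R.side ⟨Γ, insert (concFm R.q zs χ) Δ⟩ ⟨insert (concFm R.q zs χ) Γ, Δ⟩)

/-- Derivability (arbitrary cuts allowed). -/
def Derives {σ : Sig} (G : CanCalc σ) (Hyp : Set (Sqnt σ)) (sq : Sqnt σ) : Prop :=
  Deriv G Hyp Set.univ sq

/-- The formulas occurring in a set of sequents. -/
def hypFmlas {σ : Sig} (Hyp : Set (Sqnt σ)) : Set (Fm σ Empty) :=
  ⋃ s ∈ Hyp, s.ant ∪ s.suc

/-- A simple proof from `Hyp` : all cuts are on formulas from `Hyp`. -/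
def SimpleProof {σ : Sig} (G : CanCalc σ) (Hyp : Set (Sqnt σ)) (sq : Sqnt σ) : Prop :=
  Deriv G Hyp (hypFmlas Hyp) sq

/-- Applying an `L`-substitution to a sequent. -/
def Sqnt.substS {σ : Sig} (s : ℕ → Tm σ Empty) (sq : Sqnt σ) : Sqnt σ :=
  ⟨Fm.subst s '' sq.ant, Fm.subst s '' sq.suc⟩

/-- A set of sequents closed under substitution. -/
def SubstClosed {σ : Sig} (Hyp : Set (Sqnt σ)) : Prop :=
  ∀ sq ∈ Hyp, ∀ s : ℕ → Tm σ Empty, Sqnt.substS s sq ∈ Hyp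

/-- The free-variable condition for a set of sequents: variables occurring
bound are disjoint from variables occurring free. -/
def FVCond {σ : Sig} (T : Set (Sqnt σ)) : Prop :=
  (⋃ sq ∈ T, ⋃ A ∈ sq.ant ∪ sq.suc, Fm.bv A) ∩
  (⋃ sq ∈ T, ⋃ A ∈ sq.ant ∪ sq.suc, Fm.fv A) = ∅

/-- `M` is a strongly characteristic 2Nmatrix for `G`. -/
def StronglyChar {σ : Sig} (M : NMatrix σ) (G : CanCalc σ) : Prop :=
  ∀ Hyp : Set (Sqnt σ), SubstClosed Hyp → ∀ sq, Derives G Hyp sq ↔ Models M Hyp sq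

/-- `G` admits strong cut-elimination. -/
def StrongCutElim {σ : Sig} (G : CanCalc σ) : Prop :=
  ∀ Hyp : Set (Sqnt σ), SubstClosed Hyp → ∀ sq : Sqnt σ, FVCond (insert sq Hyp) →
    Derives G Hyp sq → SimpleProof G Hyp sq

/-- All quantifiers used in `G` are `(n,k)`-ary with `k ∈ {0,1}`. -/
def KAtMostOne {σ : Sig} (G : CanCalc σ) : Prop :=
  ∀ R ∈ G, σ.qk R.q = 0 ∨ σ.qk R.q = 1

/-! The calculus `G₀` of Example `notcoh`. -/

/-- A signature with a single `(2,1)`-ary quantifier `Q` (plus countably many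
function and predicate symbols of each arity). -/
def sig0 : Sig where
  Func := ℕ × ℕ
  farity := Prod.snd
  Pred := ℕ × ℕ
  parity := Prod.snd
  Quant := Unit
  qn := fun _ => 2
  qk := fun _ => 1

/-- `p₁(v₁)` -/ def a1v : RAtom 2 1 := ⟨0, fun _ => RTm.rvar 0⟩
/-- `p₂(v₁)` -/ def a2v : RAtom 2 1 := ⟨1, fun _ => RTm.rvar 0⟩
/-- `pᵢ(cⱼ)` -/ def aC (i : Fin 2) (j : ℕ) : RAtom 2 1 := ⟨i, fun _ => RTm.rconst j⟩

/-- `Θ = {p₁(v₁)⇒p₂(v₁); ⇒p₁(c₁); ⇒p₂(c₁); p₁(c₂)⇒; p₂(c₂)⇒; p₁(c₃)⇒; ⇒p₂(c₃)}` -/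
def Theta0 : List (RClause 2 1) :=
  [⟨[a1v], [a2v]⟩,
   ⟨[], [aC 0 1]⟩, ⟨[], [aC 1 1]⟩,
   ⟨[aC 0 2], []⟩, ⟨[aC 1 2], []⟩,
   ⟨[aC 0 3], []⟩, ⟨[], [aC 1 3]⟩]

/-- The calculus `G₀`, consisting of the two dual rules `Θ/⇒Qv₁(p₁(v₁),p₂(v₁))`
and `Θ/Qv₁(p₁(v₁),p₂(v₁))⇒`. -/
def G0 : CanCalc sig0 :=
  [Rule.mk () true Theta0, Rule.mk () false Theta0]

/-!
Induction on derivations: weakening preserves logical axioms, and so does cut since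
`α`-equivalence is transitive. For an application of either rule with `χ[p₁] = F₁`,
`χ[p₂] = F₂`, bound variable `z` and eigenvariable `y`, the premise `F₁{y/z} ⇒ F₂{y/z}` is an
axiom in one of four ways: inside `Γ ⇒ Δ`; through some `C ∈ Γ` with `C ≡ F₂{y/z}`, so that `z`
is not free in `F₂` (as `y` is not free in `C`) and the premise `F₂{c₂/z} ⇒`, i.e. `F₂ ⇒`, cuts
it down to `Γ ⇒ Δ`; symmetrically with `⇒ F₁{c₁/z}`; or through `F₁{y/z} ≡ F₂{y/z}`, whence
`F₁{c₃/z} ≡ F₂{c₃/z}` and the premises `F₁{c₃/z} ⇒` and `⇒ F₂{c₃/z}` combine.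

`α`-equivalence is exactly equality of locally nameless forms, which yields its transitivity,
the invariance of free variables, and the stability under replacing a fresh variable by a term.
-/

namespace Tm

theorem subst_congr {s s' : ℕ → Tm σ D} (t : Tm σ D) (h : ∀ n ∈ t.vars, s n = s' n) :
    t.subst s = t.subst s' := by
  induction t with
  | var n => exact h n rfl
  | func f ts ih =>
    exact congrArg (func f) (funext fun i => ih i fun n hn => h n (Set.mem_iUnion.2 ⟨i, hn⟩))
  | dconst a => rfl

theorem subst_var (t : Tm σ D) : t.subst var = t := by
  induction t with
  | var n => rfl
  | func f ts ih => exact congrArg (func f) (funext ih)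
  | dconst a => rfl

theorem finite_vars (t : Tm σ D) : t.vars.Finite := by
  induction t with
  | var n => exact Set.finite_singleton n
  | func f ts ih => exact Set.finite_iUnion ih
  | dconst a => exact Set.finite_empty

end Tm

namespace Fm

theorem mem_fv_quant {q : σ.Quant} {xs : Fin (σ.qk q) → ℕ} {ψ : Fin (σ.qn q) → Fm σ D}
    {i : Fin (σ.qn q)} {n : ℕ} (hn : n ∈ (ψ i).fv) (hb : ¬ ∃ j, xs j = n) :
    n ∈ (Fm.quant q xs ψ).fv :=
  ⟨Set.mem_iUnion.2 ⟨i, hn⟩, hb⟩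

theorem subst_congr {s s' : ℕ → Tm σ D} (A : Fm σ D) (h : ∀ n ∈ A.fv, s n = s' n) :
    A.subst s = A.subst s' := by
  induction A generalizing s s' with
  | atom p ts =>
    exact congrArg (atom p) (funext fun i =>
      (ts i).subst_congr fun n hn => h n (Set.mem_iUnion.2 ⟨i, hn⟩))
  | quant q xs ψ ih =>
    refine congrArg (quant q xs) (funext fun i => ih i fun n hn => ?_)
    by_cases hb : ∃ j, xs j = n
    · simp only [hb, if_true]
    · simp only [hb, if_false, h n (mem_fv_quant hn hb)]

theorem subst_var (A : Fm σ D) : A.subst Tm.var = A := by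
  induction A with
  | atom p ts => exact congrArg (atom p) (funext fun i => (ts i).subst_var)
  | quant q xs ψ ih =>
    refine congrArg (quant q xs) (funext fun i => ?_)
    rw [subst_congr (ψ i) (s' := Tm.var) fun n _ => by split_ifs <;> rfl, ih i]

theorem subst_eq_self {s : ℕ → Tm σ D} {A : Fm σ D} (h : ∀ n ∈ A.fv, s n = .var n) :
    A.subst s = A := by
  rw [subst_congr A h, subst_var]

theorem fv_subset_allVars (A : Fm σ D) : A.fv ⊆ A.allVars := by
  induction A with
  | atom p ts => exact subset_rfl
  | quant q xs ψ ih =>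
    rintro n ⟨hn, -⟩
    obtain ⟨i, hi⟩ := Set.mem_iUnion.1 hn
    exact Or.inr (Set.mem_iUnion.2 ⟨i, ih i hi⟩)

theorem bv_subset_allVars (A : Fm σ D) : A.bv ⊆ A.allVars := by
  induction A with
  | atom p ts => exact Set.empty_subset _
  | quant q xs ψ ih => exact Set.union_subset_union_right _ (Set.iUnion_mono ih)

theorem finite_allVars (A : Fm σ D) : A.allVars.Finite := by
  induction A with
  | atom p ts => exact Set.finite_iUnion fun i => (ts i).finite_vars
  | quant q xs ψ ih => exact (Set.finite_range xs).union (Set.finite_iUnion ih)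

def size : Fm σ D → ℕ
  | .atom _ _ => 0
  | .quant _ _ ψ => ∑ i, (ψ i).size + 1

theorem size_subst (s : ℕ → Tm σ D) (A : Fm σ D) : (A.subst s).size = A.size := by
  induction A generalizing s with
  | atom p ts => rfl
  | quant q xs ψ ih => simp only [subst, size, ih]

theorem size_lt_size_quant (q : σ.Quant) (xs : Fin (σ.qk q) → ℕ) (ψ : Fin (σ.qn q) → Fm σ D)
    (i : Fin (σ.qn q)) : (ψ i).size < (Fm.quant q xs ψ).size :=
  Nat.lt_succ_of_le (Finset.single_le_sum (fun j _ => Nat.zero_le (ψ j).size) (Finset.mem_univ i))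

end Fm

/-- Locally nameless terms: `bvar d j` is the `j`-th variable bound by the quantifier `d` levels
further out (`d = 0` is the innermost one). -/
inductive DTm (σ : Sig) (D : Type) where
  | fvar : ℕ → DTm σ D
  | bvar : ℕ → ℕ → DTm σ D
  | func : (f : σ.Func) → (Fin (σ.farity f) → DTm σ D) → DTm σ D
  | dconst : D → DTm σ D

inductive DFm (σ : Sig) (D : Type) where
  | atom : (p : σ.Pred) → (Fin (σ.parity p) → DTm σ D) → DFm σ D
  | quant : (q : σ.Quant) → (Fin (σ.qn q) → DFm σ D) → DFm σ D

namespace DTm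

def shift : DTm σ D → DTm σ D
  | .fvar n => .fvar n
  | .bvar d j => .bvar (d + 1) j
  | .func f ts => .func f fun i => (ts i).shift
  | .dconst a => .dconst a

def instantiate (f : ℕ → ℕ) (d : ℕ) : DTm σ D → DTm σ D
  | .fvar n => .fvar n
  | .bvar d' j => if d' = d then .fvar (f j) else .bvar d' j
  | .func g ts => .func g fun i => (ts i).instantiate f d
  | .dconst a => .dconst a

def replace (y : ℕ) (T : DTm σ D) : DTm σ D → DTm σ D
  | .fvar n => if n = y then T else .fvar n
  | .bvar d j => .bvar d j
  | .func g ts => .func g fun i => replace y T (ts i)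
  | .dconst a => .dconst a

def fvars : DTm σ D → Set ℕ
  | .fvar n => {n}
  | .bvar _ _ => ∅
  | .func _ ts => ⋃ i, (ts i).fvars
  | .dconst _ => ∅

theorem shift_instantiate (f : ℕ → ℕ) (d : ℕ) (T : DTm σ D) :
    (T.instantiate f d).shift = T.shift.instantiate f (d + 1) := by
  induction T with
  | fvar n => rfl
  | bvar d' j => by_cases h : d' = d <;> simp [instantiate, shift, h]
  | func g ts ih => exact congrArg (func g) (funext ih)
  | dconst a => rfl

theorem shift_replace {y : ℕ} {T : DTm σ D} (hT : T.shift = T) (U : DTm σ D) :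
    (replace y T U).shift = replace y T U.shift := by
  induction U with
  | fvar n => by_cases h : n = y <;> simp [replace, shift, h, hT]
  | bvar d j => rfl
  | func g ts ih => exact congrArg (func g) (funext ih)
  | dconst a => rfl

theorem fvars_shift (T : DTm σ D) : T.shift.fvars = T.fvars := by
  induction T with
  | fvar n => rfl
  | bvar d j => rfl
  | func g ts ih => exact Set.iUnion_congr ih
  | dconst a => rfl

end DTm

namespace DFm

def instantiate (f : ℕ → ℕ) (d : ℕ) : DFm σ D → DFm σ D
  | .atom p ts => .atom p fun i => (ts i).instantiate f d
  | .quant q ψ => .quant q fun i => (ψ i).instantiate f (d + 1)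

def replace (y : ℕ) (T : DTm σ D) : DFm σ D → DFm σ D
  | .atom p ts => .atom p fun i => DTm.replace y T (ts i)
  | .quant q ψ => .quant q fun i => replace y T (ψ i)

def fvars : DFm σ D → Set ℕ
  | .atom _ ts => ⋃ i, (ts i).fvars
  | .quant _ ψ => ⋃ i, (ψ i).fvars

end DFm

def Tm.toDB (e : ℕ → DTm σ D) : Tm σ D → DTm σ D
  | .var n => e n
  | .func f ts => .func f fun i => (ts i).toDB e
  | .dconst a => .dconst a

/-- The environment `e` seen under a quantifier binding `xs`. -/
def bindEnv (e : ℕ → DTm σ D) {k : ℕ} (xs : Fin k → ℕ) (n : ℕ) : DTm σ D :=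
  if h : ∃ j, xs j = n then .bvar 0 (Classical.choose h).val else (e n).shift

def Fm.toDB (e : ℕ → DTm σ D) : Fm σ D → DFm σ D
  | .atom p ts => .atom p fun i => (ts i).toDB e
  | .quant q xs ψ => .quant q fun i => (ψ i).toDB (bindEnv e xs)

theorem bindEnv_of_not_mem {e : ℕ → DTm σ D} {k : ℕ} {xs : Fin k → ℕ} {n : ℕ}
    (h : ¬ ∃ j, xs j = n) : bindEnv e xs n = (e n).shift := by
  simp [bindEnv, h]

theorem bindEnv_apply_of_injective {e : ℕ → DTm σ D} {k : ℕ} {xs : Fin k → ℕ}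
    (hxs : Function.Injective xs) (j : Fin k) : bindEnv e xs (xs j) = .bvar 0 j := by
  have h : ∃ j', xs j' = xs j := ⟨j, rfl⟩
  simp only [bindEnv, h, dif_pos, hxs (Classical.choose_spec h)]

namespace Tm

theorem toDB_congr {e e' : ℕ → DTm σ D} (t : Tm σ D) (h : ∀ n ∈ t.vars, e n = e' n) :
    t.toDB e = t.toDB e' := by
  induction t with
  | var n => exact h n rfl
  | func f ts ih =>
    exact congrArg (DTm.func f) (funext fun i => ih i fun n hn => h n (Set.mem_iUnion.2 ⟨i, hn⟩))
  | dconst a => rfl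

theorem toDB_subst (e : ℕ → DTm σ D) (s : ℕ → Tm σ D) (t : Tm σ D) :
    (t.subst s).toDB e = t.toDB fun n => (s n).toDB e := by
  induction t with
  | var n => rfl
  | func f ts ih => exact congrArg (DTm.func f) (funext ih)
  | dconst a => rfl

theorem toDB_bindEnv {e : ℕ → DTm σ D} {k : ℕ} {xs : Fin k → ℕ} (t : Tm σ D)
    (h : ∀ m ∈ t.vars, ¬ ∃ j, xs j = m) : t.toDB (bindEnv e xs) = (t.toDB e).shift := by
  induction t with
  | var n => exact bindEnv_of_not_mem (h n rfl)
  | func f ts ih =>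
    exact congrArg (DTm.func f) (funext fun i => ih i fun m hm => h m (Set.mem_iUnion.2 ⟨i, hm⟩))
  | dconst a => rfl

theorem toDB_instantiate (f : ℕ → ℕ) (d : ℕ) (e : ℕ → DTm σ D) (t : Tm σ D) :
    t.toDB (fun n => (e n).instantiate f d) = (t.toDB e).instantiate f d := by
  induction t with
  | var n => rfl
  | func g ts ih => exact congrArg (DTm.func g) (funext ih)
  | dconst a => rfl

theorem replace_toDB (y : ℕ) (T : DTm σ D) (e : ℕ → DTm σ D) (t : Tm σ D) :
    DTm.replace y T (t.toDB e) = t.toDB fun n => DTm.replace y T (e n) := by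
  induction t with
  | var n => rfl
  | func g ts ih => exact congrArg (DTm.func g) (funext ih)
  | dconst a => rfl

theorem shift_toDB_fvar (t : Tm σ D) : (t.toDB .fvar).shift = t.toDB .fvar := by
  induction t with
  | var n => rfl
  | func g ts ih => exact congrArg (DTm.func g) (funext ih)
  | dconst a => rfl

theorem fvars_toDB (e : ℕ → DTm σ D) (t : Tm σ D) :
    (t.toDB e).fvars = ⋃ n ∈ t.vars, (e n).fvars := by
  induction t with
  | var n => simp [toDB, vars]
  | func g ts ih => simp only [toDB, DTm.fvars, ih, vars, Set.biUnion_iUnion]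
  | dconst a => simp [toDB, vars, DTm.fvars]

theorem toDB_fvar_injective : Function.Injective (toDB (σ := σ) (D := D) .fvar) := by
  intro t t' h
  induction t generalizing t' with
  | var n => cases t' <;> first | exact congrArg var (DTm.fvar.inj h) | cases h
  | func f ts ih =>
    cases t' with
    | func g ts' =>
      obtain ⟨rfl, hts⟩ := DTm.func.inj h
      exact congrArg (func f) (funext fun i => ih i (congrFun (eq_of_heq hts) i))
    | _ => cases h
  | dconst a => cases t' <;> first | exact congrArg dconst (DTm.dconst.inj h) | cases h

end Tm

/-- `A{t/z}`. -/
def Fm.substAt (A : Fm σ D) (z : ℕ) (t : Tm σ D) : Fm σ D :=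
  A.subst (Function.update Tm.var z t)

namespace Fm

theorem toDB_congr {e e' : ℕ → DTm σ D} (A : Fm σ D) (h : ∀ n ∈ A.fv, e n = e' n) :
    A.toDB e = A.toDB e' := by
  induction A generalizing e e' with
  | atom p ts =>
    exact congrArg (DFm.atom p) (funext fun i =>
      (ts i).toDB_congr fun n hn => h n (Set.mem_iUnion.2 ⟨i, hn⟩))
  | quant q xs ψ ih =>
    refine congrArg (DFm.quant q) (funext fun i => ih i fun n hn => ?_)
    by_cases hb : ∃ j, xs j = n
    · simp only [bindEnv, hb, dif_pos]
    · rw [bindEnv_of_not_mem hb, bindEnv_of_not_mem hb, h n (mem_fv_quant hn hb)]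

theorem toDB_subst (e : ℕ → DTm σ D) (s : ℕ → Tm σ D) (A : Fm σ D)
    (hs : ∀ n ∈ A.fv, s n = .var n ∨ ∀ m ∈ (s n).vars, m ∉ A.bv) :
    (A.subst s).toDB e = A.toDB fun n => (s n).toDB e := by
  induction A generalizing e s with
  | atom p ts => exact congrArg (DFm.atom p) (funext fun i => (ts i).toDB_subst e s)
  | quant q xs ψ ih =>
    refine congrArg (DFm.quant q) (funext fun i => ?_)
    rw [ih i]
    · refine toDB_congr _ fun n hn => ?_
      by_cases hb : ∃ j, xs j = n
      · simp only [hb, if_true, bindEnv, dif_pos, Tm.toDB]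
      · simp only [hb, if_false]
        rw [bindEnv_of_not_mem hb]
        rcases hs n (mem_fv_quant hn hb) with h | h
        · rw [h]
          exact bindEnv_of_not_mem hb
        · exact (s n).toDB_bindEnv fun m hm ⟨j, hj⟩ => h m hm (Or.inl ⟨j, hj⟩)
    · intro n hn
      by_cases hb : ∃ j, xs j = n
      · simp only [hb, if_true, true_or]
      · simp only [hb, if_false]
        exact (hs n (mem_fv_quant hn hb)).imp_right fun h m hm hmb =>
          h m hm (Or.inr (Set.mem_iUnion.2 ⟨i, hmb⟩))

theorem substAt_eq_self {A : Fm σ D} {z : ℕ} (hz : z ∉ A.fv) (t : Tm σ D) : A.substAt z t = A :=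
  subst_eq_self fun _ hn => Function.update_of_ne (ne_of_mem_of_not_mem hn hz) _ _

theorem toDB_substAt {t : Tm σ D} {z : ℕ} (e : ℕ → DTm σ D) (A : Fm σ D) (h : FreeFor t z A) :
    (A.substAt z t).toDB e = A.toDB fun n => (Function.update Tm.var z t n).toDB e := by
  induction A generalizing e with
  | atom p ts => exact congrArg (DFm.atom p) (funext fun i => (ts i).toDB_subst e _)
  | quant q xs ψ ih =>
    by_cases hz : z ∈ (quant q xs ψ).fv
    swap
    · rw [substAt_eq_self hz]
      exact toDB_congr _ fun n hn => by
        rw [Function.update_of_ne (ne_of_mem_of_not_mem hn hz)]; rfl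
    obtain ⟨hxs, hψ⟩ : (∀ j, xs j ∉ t.vars) ∧ ∀ i, FreeFor t z (ψ i) := by
      rcases h with hb | hz' | h
      · exact absurd hb hz.2
      · exact absurd hz hz'
      · exact h
    have hunbound : (fun n => if ∃ j, xs j = n then .var n else Function.update Tm.var z t n) =
        Function.update Tm.var z t := by
      funext n
      split_ifs with hb
      · exact (Function.update_of_ne (fun hnz : n = z => hz.2 (hnz ▸ hb)) _ _).symm
      · rfl
    refine congrArg (DFm.quant q) (funext fun i => ?_)
    change ((ψ i).subst _).toDB _ = _
    rw [hunbound, ← substAt, ih i _ (hψ i)]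
    refine toDB_congr _ fun n _ => ?_
    by_cases hnz : n = z
    · subst hnz
      rw [bindEnv_of_not_mem hz.2, Function.update_self]
      exact t.toDB_bindEnv fun m hm ⟨j, hj⟩ => hxs j (hj ▸ hm)
    · simp only [Function.update_of_ne hnz, Tm.toDB, bindEnv]

theorem toDB_instantiate (f : ℕ → ℕ) (A : Fm σ D) (e : ℕ → DTm σ D) (d : ℕ) :
    A.toDB (fun n => (e n).instantiate f d) = (A.toDB e).instantiate f d := by
  induction A generalizing e d with
  | atom p ts => exact congrArg (DFm.atom p) (funext fun i => (ts i).toDB_instantiate f d e)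
  | quant q xs ψ ih =>
    refine congrArg (DFm.quant q) (funext fun i => ?_)
    rw [← ih i]
    refine toDB_congr _ fun n _ => ?_
    by_cases hb : ∃ j, xs j = n
    · simp [bindEnv, hb, DTm.instantiate]
    · simp [bindEnv, hb, DTm.shift_instantiate]

theorem replace_toDB {y : ℕ} {T : DTm σ D} (hT : T.shift = T) (A : Fm σ D) (e : ℕ → DTm σ D) :
    DFm.replace y T (A.toDB e) = A.toDB fun n => DTm.replace y T (e n) := by
  induction A generalizing e with
  | atom p ts => exact congrArg (DFm.atom p) (funext fun i => (ts i).replace_toDB y T e)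
  | quant q xs ψ ih =>
    refine congrArg (DFm.quant q) (funext fun i => ?_)
    rw [ih i]
    refine toDB_congr _ fun n _ => ?_
    by_cases hb : ∃ j, xs j = n
    · simp [bindEnv, hb, DTm.replace]
    · simp [bindEnv, hb, DTm.shift_replace hT]

theorem fvars_toDB (e : ℕ → DTm σ D) (A : Fm σ D) :
    (A.toDB e).fvars = ⋃ n ∈ A.fv, (e n).fvars := by
  induction A generalizing e with
  | atom p ts => simp only [toDB, DFm.fvars, Tm.fvars_toDB, fv, Set.biUnion_iUnion]
  | quant q xs ψ ih =>
    ext m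
    simp only [toDB, DFm.fvars, ih, fv, Set.mem_iUnion, Set.mem_sdiff, Set.mem_range]
    constructor
    · rintro ⟨i, n, hn, hm⟩
      by_cases hb : ∃ j, xs j = n
      · simp [bindEnv, hb, DTm.fvars] at hm
      · rw [bindEnv_of_not_mem hb, DTm.fvars_shift] at hm
        exact ⟨n, ⟨⟨i, hn⟩, hb⟩, hm⟩
    · rintro ⟨n, ⟨⟨i, hn⟩, hb⟩, hm⟩
      exact ⟨i, n, hn, by rwa [bindEnv_of_not_mem hb, DTm.fvars_shift]⟩

theorem fvars_toDB_fvar (A : Fm σ D) : (A.toDB .fvar).fvars = A.fv := by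
  simp [fvars_toDB, DTm.fvars]

theorem toDB_subst_renVar {k : ℕ} (ws zs : Fin k → ℕ) (e : ℕ → DTm σ D) (A : Fm σ D)
    (hfresh : ∀ j, zs j ∉ A.allVars) :
    (A.subst (renVar ws zs)).toDB e = A.toDB fun n => (renVar ws zs n : Tm σ D).toDB e := by
  refine toDB_subst e _ A fun n _ => ?_
  unfold renVar
  split_ifs with hb
  · exact .inr fun m hm hmb => hfresh _ (hm ▸ bv_subset_allVars A hmb)
  · exact .inl rfl

theorem allVars_subset_allVars_quant (q : σ.Quant) (xs : Fin (σ.qk q) → ℕ)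
    (ψ : Fin (σ.qn q) → Fm σ D) (i : Fin (σ.qn q)) :
    (ψ i).allVars ⊆ (Fm.quant q xs ψ).allVars :=
  fun _ hn => .inr (Set.mem_iUnion.2 ⟨i, hn⟩)

theorem toDB_bindEnv_subst_renVar {q : σ.Quant} {ws zs : Fin (σ.qk q) → ℕ}
    {ψ : Fin (σ.qn q) → Fm σ D} (e : ℕ → DTm σ D) (hzs : Function.Injective zs)
    (hfresh : ∀ j, zs j ∉ (Fm.quant q ws ψ).allVars) (i : Fin (σ.qn q)) :
    ((ψ i).subst (renVar ws zs)).toDB (bindEnv e zs) = (ψ i).toDB (bindEnv e ws) := by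
  have hfresh_i j : zs j ∉ (ψ i).allVars := fun h =>
    hfresh j (allVars_subset_allVars_quant q ws ψ i h)
  rw [toDB_subst_renVar ws zs _ _ hfresh_i]
  refine toDB_congr _ fun n hn => ?_
  unfold renVar
  split_ifs with hb
  · rw [Tm.toDB, bindEnv_apply_of_injective hzs]
    simp only [bindEnv, hb, dif_pos]
  · have hz : ¬ ∃ j, zs j = n := fun ⟨j, hj⟩ => hfresh_i j (hj ▸ fv_subset_allVars _ hn)
    simp only [Tm.toDB, bindEnv_of_not_mem hz, bindEnv_of_not_mem hb]

theorem toDB_fvar_subst_renVar {q : σ.Quant} {ws : Fin (σ.qk q) → ℕ}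
    {ψ : Fin (σ.qn q) → Fm σ D} (f : ℕ → ℕ) (hfresh : ∀ j, f j ∉ (Fm.quant q ws ψ).allVars)
    (i : Fin (σ.qn q)) :
    ((ψ i).subst (renVar ws fun j => f j)).toDB .fvar =
      ((ψ i).toDB (bindEnv .fvar ws)).instantiate f 0 := by
  rw [toDB_subst_renVar _ _ _ _ fun j h => hfresh j (allVars_subset_allVars_quant q ws ψ i h),
    ← toDB_instantiate]
  refine toDB_congr _ fun n _ => ?_
  unfold renVar
  split_ifs with hb
  · simp [Tm.toDB, bindEnv, hb, DTm.instantiate]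
  · simp [Tm.toDB, bindEnv, hb, DTm.instantiate, DTm.shift]

end Fm

theorem AlphaEq.toDB_eq {A B : Fm σ D} (h : AlphaEq A B) (e : ℕ → DTm σ D) :
    A.toDB e = B.toDB e := by
  induction h generalizing e with
  | atom p ts => rfl
  | quant q xs ys ψ φ zs hzs hfresh _ ih =>
    refine congrArg (DFm.quant q) (funext fun i => ?_)
    rw [← Fm.toDB_bindEnv_subst_renVar e hzs (fun j hj => hfresh j (.inl hj)),
      ← Fm.toDB_bindEnv_subst_renVar e hzs (fun j hj => hfresh j (.inr hj)), ih i]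

theorem AlphaEq.of_toDB_eq {A B : Fm σ D} (h : A.toDB .fvar = B.toDB .fvar) : AlphaEq A B := by
  induction hN : A.size using Nat.strong_induction_on generalizing A B with
  | _ N ih =>
  cases A with
  | atom p ts =>
    cases B with
    | atom p' ts' =>
      obtain ⟨rfl, hts⟩ := DFm.atom.inj h
      obtain rfl : ts = ts' :=
        funext fun i => Tm.toDB_fvar_injective (congrFun (eq_of_heq hts) i)
      exact .atom p ts
    | quant => cases h
  | quant q xs ψ =>
    cases B with
    | atom => cases h
    | quant q' ys φ =>
      obtain ⟨rfl, hbody⟩ := DFm.quant.inj h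
      obtain ⟨M, hM⟩ :=
        ((Fm.quant q xs ψ).finite_allVars.union (Fm.quant q ys φ).finite_allVars).bddAbove
      have hfresh (j : ℕ) : M + 1 + j ∉ (Fm.quant q xs ψ).allVars ∪ (Fm.quant q ys φ).allVars :=
        fun hj => by have := hM hj; omega
      refine .quant q xs ys ψ φ (fun j => M + 1 + j) (fun a b hab => Fin.ext (by simpa using hab))
        (fun j => hfresh j) fun i => ih _ ?_ ?_ rfl
      · rw [← hN, Fm.size_subst]
        exact Fm.size_lt_size_quant q xs ψ i
      · rw [Fm.toDB_fvar_subst_renVar (M + 1 + ·) (fun j hj => hfresh j (.inl hj)),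
          Fm.toDB_fvar_subst_renVar (M + 1 + ·) (fun j hj => hfresh j (.inr hj)),
          congrFun (eq_of_heq hbody) i]

theorem alphaEq_iff_toDB_eq {A B : Fm σ D} : AlphaEq A B ↔ A.toDB .fvar = B.toDB .fvar :=
  ⟨fun h => h.toDB_eq _, .of_toDB_eq⟩

namespace AlphaEq

theorem refl (A : Fm σ D) : AlphaEq A A := .of_toDB_eq rfl

theorem symm {A B : Fm σ D} (h : AlphaEq A B) : AlphaEq B A := .of_toDB_eq (h.toDB_eq _).symm

theorem trans {A B C : Fm σ D} (h : AlphaEq A B) (h' : AlphaEq B C) : AlphaEq A C :=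
  .of_toDB_eq ((h.toDB_eq _).trans (h'.toDB_eq _))

theorem fv_eq {A B : Fm σ D} (h : AlphaEq A B) : A.fv = B.fv := by
  rw [← Fm.fvars_toDB_fvar A, ← Fm.fvars_toDB_fvar B, h.toDB_eq]

end AlphaEq

namespace Fm

theorem mem_fv_substAt_var {A : Fm σ D} {z y : ℕ} (hz : z ∈ A.fv) (hA : FreeFor (.var y) z A) :
    y ∈ (A.substAt z (.var y)).fv := by
  rw [← fvars_toDB_fvar, toDB_substAt _ _ hA, fvars_toDB]
  exact Set.mem_biUnion hz (by simp [Tm.toDB, DTm.fvars])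

theorem toDB_substAt_eq_replace {A : Fm σ D} {z y : ℕ} {t : Tm σ D} (hyA : y ∉ A.fv \ {z})
    (hA : FreeFor (.var y) z A) (htA : FreeFor t z A) :
    (A.substAt z t).toDB .fvar =
      DFm.replace y (t.toDB .fvar) ((A.substAt z (.var y)).toDB .fvar) := by
  rw [toDB_substAt _ _ htA, toDB_substAt _ _ hA, replace_toDB t.shift_toDB_fvar]
  refine toDB_congr _ fun n hn => ?_
  by_cases hnz : n = z
  · simp [hnz, Tm.toDB, DTm.replace]
  · have hny : n ≠ y := by rintro rfl; exact hyA ⟨hn, hnz⟩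
    simp [hnz, hny, Tm.toDB, DTm.replace]

end Fm

namespace AlphaEq

theorem substAt_right_of_not_mem_fv {C A : Fm σ D} {z y : ℕ}
    (h : AlphaEq C (A.substAt z (.var y))) (hy : y ∉ C.fv) (hA : FreeFor (.var y) z A)
    (t : Tm σ D) : AlphaEq C (A.substAt z t) := by
  have hz : z ∉ A.fv := fun hz => hy (h.fv_eq ▸ Fm.mem_fv_substAt_var hz hA)
  rwa [Fm.substAt_eq_self hz] at h ⊢

theorem substAt_of_substAt_var {A B : Fm σ D} {z y : ℕ} {t : Tm σ D}
    (hyA : y ∉ A.fv \ {z}) (hyB : y ∉ B.fv \ {z}) (hA : FreeFor (.var y) z A)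
    (hB : FreeFor (.var y) z B) (htA : FreeFor t z A) (htB : FreeFor t z B)
    (h : AlphaEq (A.substAt z (.var y)) (B.substAt z (.var y))) :
    AlphaEq (A.substAt z t) (B.substAt z t) := by
  rw [alphaEq_iff_toDB_eq] at h ⊢
  rw [Fm.toDB_substAt_eq_replace hyA hA htA, Fm.toDB_substAt_eq_replace hyB hB htB, h]

end AlphaEq

def Sqnt.IsAxiom (sq : Sqnt σ) : Prop :=
  ∃ A ∈ sq.ant, ∃ B ∈ sq.suc, AlphaEq A B

namespace Sqnt.IsAxiom

variable {Γ Δ : Set (Fm σ Empty)}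

theorem mono {Γ' Δ' : Set (Fm σ Empty)} (h : IsAxiom ⟨Γ, Δ⟩) (hΓ : Γ ⊆ Γ') (hΔ : Δ ⊆ Δ') :
    IsAxiom ⟨Γ', Δ'⟩ :=
  let ⟨A, hA, B, hB, hAB⟩ := h
  ⟨A, hΓ hA, B, hΔ hB, hAB⟩

theorem deriv {G : CanCalc σ} {Hyp : Set (Sqnt σ)} {Cut : Set (Fm σ Empty)} {sq : Sqnt σ}
    (h : sq.IsAxiom) : Deriv G Hyp Cut sq :=
  let ⟨_, hA, _, hB, hAB⟩ := h
  .weaken (.ax hAB) (Set.singleton_subset_iff.2 hA) (Set.singleton_subset_iff.2 hB)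

theorem cases_insert_insert {A B : Fm σ Empty} (h : IsAxiom ⟨insert A Γ, insert B Δ⟩) :
    IsAxiom ⟨Γ, Δ⟩ ∨ (∃ C ∈ Γ, AlphaEq C B) ∨ (∃ C ∈ Δ, AlphaEq A C) ∨ AlphaEq A B := by
  obtain ⟨A', hA', B', hB', hAB⟩ := h
  rcases hA' with rfl | hA' <;> rcases hB' with rfl | hB'
  exacts [.inr (.inr (.inr hAB)), .inr (.inr (.inl ⟨B', hB', hAB⟩)),
    .inr (.inl ⟨A', hA', hAB⟩), .inl ⟨A', hA', B', hB', hAB⟩]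

theorem resolve {F F' : Fm σ Empty} (h : IsAxiom ⟨Γ, insert F Δ⟩)
    (h' : IsAxiom ⟨insert F' Γ, Δ⟩) (hF : AlphaEq F F') : IsAxiom ⟨Γ, Δ⟩ := by
  obtain ⟨A, hA, B, rfl | hB, hAB⟩ := h
  · obtain ⟨A', rfl | hA', B', hB', hAB'⟩ := h'
    · exact ⟨A, hA, B', hB', hAB.trans (hF.trans hAB')⟩
    · exact ⟨A', hA', B', hB', hAB'⟩
  · exact ⟨A, hA, B, hB, hAB⟩

end Sqnt.IsAxiom

def Rule.PreservesAxioms (R : Rule σ) : Prop :=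
  ∀ χ zs Γ Δ, ChiOK R χ zs Γ Δ →
    (∀ cl ∈ R.prem, Sqnt.IsAxiom ⟨Γ ∪ χ.fmSet zs cl.ant, Δ ∪ χ.fmSet zs cl.suc⟩) →
    Sqnt.IsAxiom (cond R.side ⟨Γ, insert (concFm R.q zs χ) Δ⟩ ⟨insert (concFm R.q zs χ) Γ, Δ⟩)

theorem Deriv.isAxiom {G : CanCalc σ} {Cut : Set (Fm σ Empty)} {sq : Sqnt σ}
    (hG : ∀ R ∈ G, R.PreservesAxioms) (h : Deriv G ∅ Cut sq) : sq.IsAxiom := by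
  induction h with
  | hyp hs => exact absurd hs (Set.notMem_empty _)
  | ax hAA' => exact ⟨_, rfl, _, rfl, hAA'⟩
  | weaken _ hΓ hΔ ih => exact ih.mono hΓ hΔ
  | cut _ _ _ ih ih' => exact ih.resolve ih' (.refl _)
  | app hR χ zs Γ Δ hok _ ih => exact hG _ hR χ zs Γ Δ hok ih

theorem ChiMap.fmSet_nil {n k : ℕ} (χ : ChiMap σ n) (zs : Fin k → ℕ) : χ.fmSet zs [] = ∅ := by
  simp [fmSet]

theorem ChiMap.fmSet_singleton {n : ℕ} (χ : ChiMap σ n) (zs : Fin 1 → ℕ) (a : RAtom n 1) :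
    χ.fmSet zs [a] = {(χ.fp a.idx).substAt (zs 0) (χ.tm (a.args 0))} := by
  have hatom : χ.atomFm zs a = (χ.fp a.idx).substAt (zs 0) (χ.tm (a.args 0)) := by
    refine congrArg (Fm.subst · (χ.fp a.idx)) (funext fun m => ?_)
    by_cases hm : m = zs 0
    · subst hm
      have h : ∃ j, zs j = zs 0 := ⟨0, rfl⟩
      rw [dif_pos h, Function.update_self, Subsingleton.elim (Classical.choose h) 0]
    · rw [dif_neg fun ⟨j, hj⟩ => hm (by rw [← hj, Subsingleton.elim j 0]),
        Function.update_of_ne hm]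
  simp [fmSet, hatom]

theorem isAxiom_of_theta0_instances {Γ Δ : Set (Fm σ Empty)} {F₁ F₂ : Fm σ Empty} {z y : ℕ}
    {c₁ c₂ c₃ : Tm σ Empty} (hyΓ : ∀ A ∈ Γ, y ∉ A.fv) (hyΔ : ∀ A ∈ Δ, y ∉ A.fv)
    (hy₁ : y ∉ F₁.fv \ {z}) (hy₂ : y ∉ F₂.fv \ {z})
    (hyF₁ : FreeFor (.var y) z F₁) (hyF₂ : FreeFor (.var y) z F₂)
    (hc₃F₁ : FreeFor c₃ z F₁) (hc₃F₂ : FreeFor c₃ z F₂)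
    (h₀ : Sqnt.IsAxiom ⟨insert (F₁.substAt z (.var y)) Γ, insert (F₂.substAt z (.var y)) Δ⟩)
    (h₁ : Sqnt.IsAxiom ⟨Γ, insert (F₁.substAt z c₁) Δ⟩)
    (h₂ : Sqnt.IsAxiom ⟨insert (F₂.substAt z c₂) Γ, Δ⟩)
    (h₃ : Sqnt.IsAxiom ⟨insert (F₁.substAt z c₃) Γ, Δ⟩)
    (h₃' : Sqnt.IsAxiom ⟨Γ, insert (F₂.substAt z c₃) Δ⟩) : Sqnt.IsAxiom ⟨Γ, Δ⟩ := by
  rcases h₀.cases_insert_insert with h | ⟨C, hC, hCF⟩ | ⟨C, hC, hFC⟩ | hF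
  · exact h
  · have hC' := hCF.substAt_right_of_not_mem_fv (hyΓ C hC) hyF₂ c₂
    exact Sqnt.IsAxiom.resolve ⟨C, hC, _, Set.mem_insert _ _, hC'⟩ h₂ (.refl _)
  · have hC' := (hFC.symm.substAt_right_of_not_mem_fv (hyΔ C hC) hyF₁ c₁).symm
    exact h₁.resolve ⟨_, Set.mem_insert _ _, C, hC, hC'⟩ (.refl _)
  · exact h₃'.resolve h₃ (hF.substAt_of_substAt_var hy₁ hy₂ hyF₁ hyF₂ hc₃F₁ hc₃F₂).symm

theorem theta0Rule_preservesAxioms (b : Bool) :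
    (Rule.mk () b Theta0 : Rule sig0).PreservesAxioms := by
  rintro (χ : ChiMap sig0 2) (zs : Fin 1 → ℕ) Γ Δ ⟨-, -, -, hok⟩ hprem
  dsimp only [sig0] at hok hprem ⊢
  have hok' (cl : RClause 2 1) (hcl : cl ∈ Theta0) (a : RAtom 2 1) (ha : a ∈ cl.atoms) :=
    hok cl hcl a ha 0
  have hy := (hok' ⟨[a1v], [a2v]⟩ (by simp [Theta0]) a1v (by simp [RClause.atoms])).2 0 rfl
  have hyF (i : Fin 2) : χ.fvv 0 ∉ (χ.fp i).fv \ {zs 0} := fun ⟨hi, hz⟩ =>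
    hy (.inr ⟨Set.mem_iUnion.2 ⟨i, hi⟩, fun ⟨j, hj⟩ =>
      hz (hj ▸ congrArg zs (Fin.fin_one_eq_zero j))⟩)
  replace hprem (cl : RClause 2 1) (hcl : cl ∈ Theta0) :
      Sqnt.IsAxiom ⟨Γ ∪ χ.fmSet zs cl.ant, Δ ∪ χ.fmSet zs cl.suc⟩ := hprem cl hcl
  simp only [Theta0, List.forall_mem_cons, List.not_mem_nil, IsEmpty.forall_iff, implies_true,
    and_true, ChiMap.fmSet_nil, ChiMap.fmSet_singleton, Set.union_empty, Set.union_singleton]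
    at hprem
  obtain ⟨h₀, h₁, -, -, h₂, h₃, h₃'⟩ := hprem
  have hΓΔ : Sqnt.IsAxiom ⟨Γ, Δ⟩ := isAxiom_of_theta0_instances
    (fun A hA hyA => hy (.inl (Set.mem_biUnion (.inl hA) hyA)))
    (fun A hA hyA => hy (.inl (Set.mem_biUnion (.inr hA) hyA))) (hyF 0) (hyF 1)
    (hok' ⟨[a1v], [a2v]⟩ (by simp [Theta0]) a1v (by simp [RClause.atoms])).1
    (hok' ⟨[a1v], [a2v]⟩ (by simp [Theta0]) a2v (by simp [RClause.atoms])).1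
    (hok' ⟨[aC 0 3], []⟩ (by simp [Theta0]) (aC 0 3) (by simp [RClause.atoms])).1
    (hok' ⟨[], [aC 1 3]⟩ (by simp [Theta0]) (aC 1 3) (by simp [RClause.atoms])).1
    h₀ h₁ h₂ h₃ h₃'
  cases b
  exacts [hΓΔ.mono (Set.subset_insert _ _) subset_rfl, hΓΔ.mono subset_rfl (Set.subset_insert _ _)]

theorem G0_preservesAxioms : ∀ R ∈ G0, R.PreservesAxioms := by
  simp only [G0, List.mem_cons, List.not_mem_nil, or_false]
  rintro R (rfl | rfl) <;> exact theta0Rule_preservesAxioms _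

theorem ruleVars_Theta0 : ruleVars Theta0 = {0} := by
  ext x
  simp [ruleVars, Theta0, RClause.atoms, a1v, a2v, aC]

theorem ruleConsts_Theta0 : ruleConsts Theta0 = {1, 2, 3} := by
  ext x
  simp [ruleConsts, Theta0, RClause.atoms, a1v, a2v, aC, eq_comm]

theorem goodRen_Theta0 : GoodRen Theta0 Theta0 (· + 1) (· + 3) := by
  refine ⟨add_left_injective 1, add_left_injective 3, ?_, ?_⟩ <;>
    simp [ruleVars_Theta0, ruleConsts_Theta0]

theorem rConsistent_Theta0 : RConsistent (Theta0 ++ renClauses (· + 1) (· + 3) Theta0) := by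
  -- An element of the domain is the pair of truth values of `p₁, p₂` at it; `cⱼ` and its
  -- renamed copy `c_{j+3}` both get the pair that `Θ` demands of `c_{j mod 3}`.
  refine ⟨Fin 2 → Bool, ⟨![true, true]⟩, fun c => ![c % 3 = 1, c % 3 ≠ 2], fun i d => d 0 i,
    fun _ => ![true, true], ?_⟩
  simp only [RClause.trueIn]
  decide

theorem G0_not_coherent : ¬ Coherent G0 := fun h =>
  h () Theta0 Theta0 (by simp [G0]) (by simp [G0]) _ _ goodRen_Theta0 rConsistent_Theta0

/-- Every sequent provable in `G₀` is a logical axiom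
(contains `α`-equivalent formulas on both sides); consequently `G₀` admits
standard cut-elimination, although it is not coherent. -/
theorem G0_provable_iff_axiom :
    (∀ sq : Sqnt sig0, Derives G0 ∅ sq → ∃ A ∈ sq.ant, ∃ B ∈ sq.suc, AlphaEq A B) ∧
    (∀ sq : Sqnt sig0, FVCond {sq} → Derives G0 ∅ sq → Deriv G0 ∅ ∅ sq) ∧
    ¬ Coherent G0 := by
  have isAxiom_of_derives (sq : Sqnt sig0) (h : Derives G0 ∅ sq) : sq.IsAxiom :=
    h.isAxiom G0_preservesAxioms
  exact ⟨isAxiom_of_derives, fun sq _ h => (isAxiom_of_derives sq h).deriv, G0_not_coherent⟩
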